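/- Let K, T, B > 0. There is a constant β depending only on K, T, B with the following property. Let C : ℝ → ℝ³ be a C⁴ curve parametrized by arclength with C(0) = 0, |C''| ≤ K, |C'''| ≤ T, |C⁗| ≤ B, and let 0 ≤ s ≤ s₁. Then | C'(s) · (C'(0) × C'(s₁)) | ≤ (K·T/2)·s₁³ + β·s₁⁴; that is, the unnormalized height of the tantrix point C'(s) above the plane spanned by C'(0) and C'(s₁) is bounded by (K·T/2)·s₁³ to leading order. -/

import Mathlib

noncomputable section

/-- Cross product on `ℝ³`. -/
def cross3 (v w : EuclideanSpace ℝ (Fin 3)) : EuclideanSpace ℝ (Fin 3) :=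
  WithLp.toLp 2 ![v 1 * w 2 - v 2 * w 1, v 2 * w 0 - v 0 * w 2, v 0 * w 1 - v 1 * w 0]

/-- Euclidean inner product on `ℝ³`. -/
def dot3 (v w : EuclideanSpace ℝ (Fin 3)) : ℝ := inner ℝ v w

/-!
Write `f = C'`, `a = f 0`, `a' = f' 0`, `a'' = f'' 0`. By Taylor's theorem
`f u = a + u a' + (u²/2) a'' + O(B u³)`, `f u = a + u a' + O(T u²)` and `f u = a + O(K u)`.
The triple product `[f s, a, f s₁]` equals `[f s - a, a, f s₁ - a]`; substituting these
expansions, every term is `O(s₁⁴)` except `(s s₁²/2 - s² s₁/2) [a', a, a'']`, which is at most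
`(s₁³/2) |a'| |a''| ≤ (K T/2) s₁³` because `|a| = 1`.
-/

open Matrix WithLp

theorem norm_sub_taylor_le_of_forall_norm_iteratedDeriv_le {E : Type*} [NormedAddCommGroup E]
    [NormedSpace ℝ E] {f : ℝ → E} {n : ℕ} {M a x : ℝ} (hf : ContDiff ℝ (n + 1) f)
    (hM : ∀ u, ‖iteratedDeriv (n + 1) f u‖ ≤ M) (hax : a ≤ x) :
    ‖f x - ∑ k ∈ Finset.range (n + 1), ((k.factorial : ℝ)⁻¹ * (x - a) ^ k) • iteratedDeriv k f a‖ ≤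
      M * (x - a) ^ (n + 1) / n.factorial := by
  rcases hax.eq_or_lt with rfl | hlt
  · simp [Finset.sum_range_succ']
  have hderiv {k : ℕ} (hk : k ≤ n + 1) {y : ℝ} (hy : y ∈ Set.Icc a x) :
      iteratedDerivWithin k f (Set.Icc a x) y = iteratedDeriv k f y :=
    iteratedDerivWithin_eq_iteratedDeriv (uniqueDiffOn_Icc hlt)
      ((hf.of_le (mod_cast hk)).contDiffAt) hy
  have := taylor_mean_remainder_bound hax hf.contDiffOn (Set.right_mem_Icc.2 hax)
    fun y hy => (hderiv le_rfl hy).symm ▸ hM y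
  rwa [taylor_within_apply, Finset.sum_congr rfl fun k hk => by
    rw [hderiv ((Finset.mem_range_succ_iff.1 hk).trans n.le_succ) (Set.left_mem_Icc.2 hax)]] at this

lemma cross3_eq_toLp_crossProduct (v w : EuclideanSpace ℝ (Fin 3)) :
    cross3 v w = toLp 2 (ofLp v ⨯₃ ofLp w) := by
  ext i; fin_cases i <;> simp [cross3, cross_apply]

lemma norm_cross3_le (v w : EuclideanSpace ℝ (Fin 3)) : ‖cross3 v w‖ ≤ ‖v‖ * ‖w‖ := by
  rw [cross3_eq_toLp_crossProduct, InnerProductGeometry.norm_ofLp_crossProduct]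
  exact mul_le_of_le_one_right (by positivity) (Real.sin_le_one _)

lemma abs_dot3_cross3_le (u v w : EuclideanSpace ℝ (Fin 3)) :
    |dot3 u (cross3 v w)| ≤ ‖u‖ * ‖v‖ * ‖w‖ :=
  (abs_real_inner_le_norm u _).trans <| by
    rw [mul_assoc]; gcongr; exact norm_cross3_le v w

lemma dot3_cross3_eq_taylor_expansion (x y a a' a'' : EuclideanSpace ℝ (Fin 3)) (s s₁ : ℝ) :
    dot3 x (cross3 a y) =
      (s * (s₁ ^ 2 / 2) - s ^ 2 / 2 * s₁) * dot3 a' (cross3 a a'') +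
      s * dot3 a' (cross3 a (y - (a + s₁ • a' + (s₁ ^ 2 / 2) • a''))) +
      s ^ 2 / 2 * dot3 a'' (cross3 a (y - (a + s₁ • a'))) +
      dot3 (x - (a + s • a' + (s ^ 2 / 2) • a'')) (cross3 a (y - a)) := by
  simp only [dot3, cross3, EuclideanSpace.inner_eq_star_dotProduct, dotProduct, Fin.isValue,
    Pi.star_apply, star_trivial, Fin.sum_univ_three, cons_val_zero, cons_val_one, cons_val,
    PiLp.sub_apply, PiLp.add_apply, PiLp.smul_apply, smul_eq_mul, ofLp_sub, ofLp_add, ofLp_smul,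
    Pi.sub_apply, Pi.add_apply, Pi.smul_apply]
  ring

lemma abs_dot3_cross3_le_of_taylor {x y a a' a'' : EuclideanSpace ℝ (Fin 3)} {s s₁ K T B : ℝ}
    (ha : ‖a‖ = 1) (ha' : ‖a'‖ ≤ K) (ha'' : ‖a''‖ ≤ T) (hB : 0 ≤ B)
    (hx : ‖x - (a + s • a' + (s ^ 2 / 2) • a'')‖ ≤ B * s ^ 3 / 2)
    (hy₂ : ‖y - (a + s₁ • a' + (s₁ ^ 2 / 2) • a'')‖ ≤ B * s₁ ^ 3 / 2)
    (hy₁ : ‖y - (a + s₁ • a')‖ ≤ T * s₁ ^ 2) (hy₀ : ‖y - a‖ ≤ K * s₁)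
    (hs : 0 ≤ s) (hss : s ≤ s₁) :
    |dot3 x (cross3 a y)| ≤ K * T / 2 * s₁ ^ 3 + (K * B + T ^ 2 / 2) * s₁ ^ 4 := by
  have hK : 0 ≤ K := (norm_nonneg _).trans ha'
  have hT : 0 ≤ T := (norm_nonneg _).trans ha''
  have hs₁ : 0 ≤ s₁ := hs.trans hss
  have htriple (u w : EuclideanSpace ℝ (Fin 3)) : |dot3 u (cross3 a w)| ≤ ‖u‖ * ‖w‖ := by
    simpa [ha] using abs_dot3_cross3_le u a w
  rw [dot3_cross3_eq_taylor_expansion x y a a' a'' s s₁]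
  have hcoeff : |s * (s₁ ^ 2 / 2) - s ^ 2 / 2 * s₁| ≤ s₁ ^ 3 / 2 :=
    abs_le.2 ⟨by nlinarith [mul_nonneg hs hs₁], by nlinarith [mul_nonneg hs hs₁]⟩
  have h₁ : |(s * (s₁ ^ 2 / 2) - s ^ 2 / 2 * s₁) * dot3 a' (cross3 a a'')| ≤
      K * T / 2 * s₁ ^ 3 := by
    rw [abs_mul]
    calc _ ≤ s₁ ^ 3 / 2 * (K * T) :=
          mul_le_mul hcoeff ((htriple _ _).trans (by gcongr)) (abs_nonneg _) (by positivity)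
      _ = K * T / 2 * s₁ ^ 3 := by ring
  have h₂ : |s * dot3 a' (cross3 a (y - (a + s₁ • a' + (s₁ ^ 2 / 2) • a'')))| ≤
      K * B / 2 * s₁ ^ 4 := by
    rw [abs_mul, abs_of_nonneg hs]
    calc _ ≤ s₁ * (K * (B * s₁ ^ 3 / 2)) := by gcongr; exact (htriple _ _).trans (by gcongr)
      _ = K * B / 2 * s₁ ^ 4 := by ring
  have h₃ : |s ^ 2 / 2 * dot3 a'' (cross3 a (y - (a + s₁ • a')))| ≤ T ^ 2 / 2 * s₁ ^ 4 := by
    rw [abs_mul, abs_of_nonneg (by positivity)]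
    calc _ ≤ s₁ ^ 2 / 2 * (T * (T * s₁ ^ 2)) := by gcongr; exact (htriple _ _).trans (by gcongr)
      _ = T ^ 2 / 2 * s₁ ^ 4 := by ring
  have h₄ : |dot3 (x - (a + s • a' + (s ^ 2 / 2) • a'')) (cross3 a (y - a))| ≤
      B * K / 2 * s₁ ^ 4 :=
    calc _ ≤ B * s ^ 3 / 2 * (K * s₁) := (htriple _ _).trans (by gcongr)
      _ ≤ B * s₁ ^ 3 / 2 * (K * s₁) := by gcongr
      _ = B * K / 2 * s₁ ^ 4 := by ring
  refine (abs_add_le _ _).trans ((add_le_add_left (abs_add_three _ _ _) _).trans ?_)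
  linarith

theorem tantrix_height_above_tangent_plane_general (K T B : ℝ) :
    ∃ β : ℝ, ∀ (C : ℝ → EuclideanSpace ℝ (Fin 3)) (s s₁ : ℝ),
      ContDiff ℝ 4 C → C 0 = 0 →
      (∀ u : ℝ, ‖deriv C u‖ = 1) →
      (∀ u : ℝ, ‖iteratedDeriv 2 C u‖ ≤ K) →
      (∀ u : ℝ, ‖iteratedDeriv 3 C u‖ ≤ T) →
      (∀ u : ℝ, ‖iteratedDeriv 4 C u‖ ≤ B) →
      0 ≤ s → s ≤ s₁ →
      |dot3 (deriv C s) (cross3 (deriv C 0) (deriv C s₁))| ≤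
        K * T / 2 * s₁ ^ 3 + β * s₁ ^ 4 := by
  refine ⟨K * B + T ^ 2 / 2, fun C s s₁ hC _ hunit hK hT hB hs hss => ?_⟩
  have hf : ContDiff ℝ 3 (deriv C) := hC.deriv'
  have hfC (k : ℕ) : iteratedDeriv k (deriv C) = iteratedDeriv (k + 1) C :=
    iteratedDeriv_succ'.symm
  have taylor (n : ℕ) (hn : n ≤ 2) {M : ℝ} (hM : ∀ u, ‖iteratedDeriv (n + 2) C u‖ ≤ M) {x : ℝ}
      (hx : 0 ≤ x) := norm_sub_taylor_le_of_forall_norm_iteratedDeriv_le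
    (hf.of_le (by exact_mod_cast Nat.succ_le_succ hn)) (fun u => hfC (n + 1) ▸ hM u) hx
  have hs₁ := hs.trans hss
  refine abs_dot3_cross3_le_of_taylor (hunit 0) (hK 0) (hT 0) ((norm_nonneg _).trans (hB 0))
    ?_ ?_ ?_ ?_ hs hss
  · simpa [Finset.sum_range_succ, hfC, inv_mul_eq_div] using taylor 2 le_rfl hB hs
  · simpa [Finset.sum_range_succ, hfC, inv_mul_eq_div] using taylor 2 le_rfl hB hs₁
  · simpa [Finset.sum_range_succ, hfC] using taylor 1 (by norm_num) hT hs₁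
  · simpa [Finset.sum_range_succ, hfC] using taylor 0 (by norm_num) hK hs₁

/-- There is a constant `β = β(K,T,B)` such that for any unit-speed `C⁴`
curve `C` with `C 0 = 0`, `|C''| ≤ K`, `|C'''| ≤ T`, `|C⁗| ≤ B`, and any `0 ≤ s ≤ s₁`,
`|C'(s)·(C'(0) × C'(s₁))| ≤ (K·T/2)·s₁³ + β·s₁⁴`: the unnormalized height of the tantrix
point `C'(s)` above the plane spanned by `C'(0)` and `C'(s₁)` is bounded by `(K·T/2)·s₁³`
to leading order. -/
theorem tantrix_height_above_tangent_plane (K T B : ℝ) (hK : 0 < K) (hT : 0 < T) (hB : 0 < B) :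
    ∃ β : ℝ, ∀ (C : ℝ → EuclideanSpace ℝ (Fin 3)) (s s₁ : ℝ),
      ContDiff ℝ 4 C → C 0 = 0 →
      (∀ u : ℝ, ‖deriv C u‖ = 1) →
      (∀ u : ℝ, ‖iteratedDeriv 2 C u‖ ≤ K) →
      (∀ u : ℝ, ‖iteratedDeriv 3 C u‖ ≤ T) →
      (∀ u : ℝ, ‖iteratedDeriv 4 C u‖ ≤ B) →
      0 ≤ s → s ≤ s₁ →
      |dot3 (deriv C s) (cross3 (deriv C 0) (deriv C s₁))| ≤
        K * T / 2 * s₁ ^ 3 + β * s₁ ^ 4 :=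
  tantrix_height_above_tangent_plane_general K T B

end
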